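/- For all real numbers γ0 > 0, a < 1, 0 < p < 1 and all integers 1 ≤ i ≤ n, one has Σ_{j=0}^{i} γ0^j · p^{−a·j} · S_a(i,j) · R_{n,γ0,a,p}(i,j) = Σ_{ℓ=0}^n γ0^ℓ · p^{−a·ℓ} · S_a(n,ℓ). -/

import Mathlib

open scoped Classical BigOperators

/-- Generalized Stirling numbers of the first kind:
`S_a(n,l) = (n!/l!) · Σ over compositions of n into l positive parts of
∏ Γ(n_k − a)/(n_k!·Γ(1−a))`. -/
noncomputable def genStirling (a : ℝ) (n l : ℕ) : ℝ :=
  (n.factorial : ℝ) / (l.factorial : ℝ) *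
    ∑ f ∈ (Finset.Nat.antidiagonalTuple l n).filter (fun f => ∀ k, 0 < f k),
      ∏ k, Real.Gamma ((f k : ℝ) - a) / ((f k).factorial * Real.Gamma (1 - a))

/-- `D_n = Σ_{ℓ=0}^n γ0^ℓ · p^{−a·ℓ} · S_a(n,ℓ)`. -/
noncomputable def Dsum (γ0 a p : ℝ) (n : ℕ) : ℝ :=
  ∑ l ∈ Finset.range (n + 1), γ0 ^ l * p ^ (-(a * (l : ℝ))) * genStirling a n l

/-- The backward recursion `R_{n,γ0,a,p}(i,j)`: `R(n,j) = 1` and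
`R(i,j) = (i − a·j)·R(i+1,j) + γ0·p^{−a}·R(i+1,j+1)` for `i < n`. -/
noncomputable def Rrec (γ0 a p : ℝ) (n : ℕ) : ℕ → ℕ → ℝ
  | i, j =>
    if _ : n ≤ i then 1
    else ((i : ℝ) - a * (j : ℝ)) * Rrec γ0 a p n (i + 1) j
      + γ0 * p ^ (-a) * Rrec γ0 a p n (i + 1) (j + 1)
  termination_by i _ => n - i
  decreasing_by all_goals omega

/-!
Put `x = γ0 · p^(-a)`, so that `γ0^j · p^(-a·j) = x^j`. Summation by parts turns the backward
recursion of `R` into the triangular recursion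
`S_a(i+1, j+1) = (i - a·(j+1)) · S_a(i, j+1) + S_a(i, j)`, so `Σ_j x^j S_a(i,j) R(i,j)` does not
change when `i` increases, and at `i = n`, where `R ≡ 1`, it is `D_n`.
The triangular recursion comes from the generating function
`W(z) = Σ_{m ≥ 1} Γ(m - a) / (m! Γ(1 - a)) z^m = (1 - (1 - z)^a) / a`: one has
`S_a(n, l) = n!/l! · [z^n] W^l`, and `(1 - z) W' = 1 - a W` gives
`(1 - z) (W^(l+1))' = (l + 1) W^l (1 - a W)`, whose coefficients are the recursion.
-/

namespace PowerSeries

open Finset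

variable {R : Type*} [CommRing R]

theorem coeff_X_mul_derivative (f : R⟦X⟧) (n : ℕ) :
    coeff n (X * d⁄dX R f) = n * coeff n f := by
  cases n with
  | zero => simp
  | succ n => rw [coeff_succ_X_mul, coeff_derivative, mul_comm, Nat.cast_succ]

theorem coeff_pow_eq_sum_antidiagonalTuple (φ : R⟦X⟧) (l n : ℕ) :
    coeff n (φ ^ l) = ∑ f ∈ Nat.antidiagonalTuple l n, ∏ k, coeff (f k) φ := by
  rw [← Fin.prod_const, coeff_prod, finsuppAntidiag, sum_map,
    ← piAntidiag_univ_fin_eq_antidiagonalTuple]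
  exact sum_attach (piAntidiag univ n) fun f => ∏ k, coeff (f k) φ

theorem coeff_succ_pow_succ_of_derivative_eq {F : R⟦X⟧} {c : R}
    (hF : d⁄dX R F = 1 - C c * F + X * d⁄dX R F) (l n : ℕ) :
    coeff (n + 1) (F ^ (l + 1)) * (n + 1)
      = (n - c * (l + 1)) * coeff n (F ^ (l + 1)) + (l + 1) * coeff n (F ^ l) := by
  have h : d⁄dX R (F ^ (l + 1))
      = C ((l : R) + 1) * F ^ l - C (c * (l + 1)) * F ^ (l + 1) + X * d⁄dX R (F ^ (l + 1)) := by
    rw [derivative_pow, add_tsub_cancel_right, map_mul, map_add, map_natCast, map_one]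
    push_cast
    linear_combination ((l : R⟦X⟧) + 1) * F ^ l * hF
  have hcoeff := congrArg (coeff n) h
  rw [coeff_derivative, map_add, map_sub, coeff_C_mul, coeff_C_mul,
    coeff_X_mul_derivative] at hcoeff
  rw [hcoeff]
  ring

end PowerSeries

open PowerSeries Finset

theorem sum_range_succ_shift_of_eq_zero {M : Type*} [AddCommMonoid M] {f : ℕ → M} {n : ℕ}
    (h0 : f 0 = 0) (hn : f n = 0) : ∑ j ∈ range n, f (j + 1) = ∑ j ∈ range n, f j := by
  simpa [h0, hn] using (sum_range_succ' f n).symm.trans (sum_range_succ f n)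

noncomputable def genStirlingSeries (a : ℝ) : ℝ⟦X⟧ :=
  mk fun m => if m = 0 then 0 else Real.Gamma (m - a) / (m.factorial * Real.Gamma (1 - a))

theorem genStirling_eq_coeff_pow (a : ℝ) (n l : ℕ) :
    genStirling a n l = n.factorial / l.factorial * coeff n (genStirlingSeries a ^ l) := by
  rw [genStirling, coeff_pow_eq_sum_antidiagonalTuple, sum_filter]
  congr 1
  refine sum_congr rfl fun f _ => ?_
  split_ifs with hf
  · exact prod_congr rfl fun k _ => by simp [genStirlingSeries, (hf k).ne']
  · obtain ⟨k, hk⟩ := not_forall.mp hf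
    exact (prod_eq_zero (mem_univ k) (by simp [genStirlingSeries, Nat.eq_zero_of_not_pos hk])).symm

theorem derivative_genStirlingSeries {a : ℝ} (ha : a < 1) :
    d⁄dX ℝ (genStirlingSeries a)
      = 1 - C a * genStirlingSeries a + X * d⁄dX ℝ (genStirlingSeries a) := by
  have hΓ : Real.Gamma (1 - a) ≠ 0 := (Real.Gamma_pos_of_pos (by linarith)).ne'
  ext n
  rw [map_add, map_sub, coeff_C_mul, coeff_X_mul_derivative, coeff_derivative, coeff_one]
  rcases n with _ | m
  · simp [genStirlingSeries, hΓ]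
  · have hm : ((m : ℝ) + 1 - a) ≠ 0 := by have := m.cast_nonneg (α := ℝ); linarith
    simp only [genStirlingSeries, coeff_mk, Nat.add_one_ne_zero, if_false, Nat.cast_add,
      Nat.cast_one]
    rw [show ((m : ℝ) + 1 + 1 - a) = (m + 1 - a) + 1 by ring, Real.Gamma_add_one hm,
      Nat.factorial_succ (m + 1)]
    push_cast
    field_simp
    ring

theorem genStirling_succ_succ {a : ℝ} (ha : a < 1) (n l : ℕ) :
    genStirling a (n + 1) (l + 1)
      = (n - a * (l + 1)) * genStirling a n (l + 1) + genStirling a n l := by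
  have h := coeff_succ_pow_succ_of_derivative_eq (derivative_genStirlingSeries ha) l n
  simp only [genStirling_eq_coeff_pow, Nat.factorial_succ]
  push_cast
  field_simp
  linear_combination h

theorem genStirling_succ_zero (a : ℝ) (n : ℕ) : genStirling a (n + 1) 0 = 0 := by
  simp [genStirling_eq_coeff_pow, coeff_one]

theorem genStirling_eq_zero_of_lt (a : ℝ) {n l : ℕ} (h : n < l) : genStirling a n l = 0 := by
  have hX : X ^ l ∣ genStirlingSeries a ^ l :=
    pow_dvd_pow_of_dvd (X_dvd_iff.mpr (by simp [genStirlingSeries])) l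
  rw [genStirling_eq_coeff_pow, X_pow_dvd_iff.mp hX n h, mul_zero]

theorem sum_pow_mul_genStirling_succ {a : ℝ} (ha : a < 1) (x : ℝ) (g : ℕ → ℝ) (i : ℕ) :
    ∑ j ∈ range (i + 1), x ^ j * genStirling a i j * ((i - a * j) * g j + x * g (j + 1))
      = ∑ j ∈ range (i + 2), x ^ j * genStirling a (i + 1) j * g j := by
  set F : ℕ → ℝ := fun j => x ^ j * genStirling a i j * ((i - a * j) * g j)
  have hF : ∑ j ∈ range (i + 1), F (j + 1) = ∑ j ∈ range (i + 1), F j := by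
    refine sum_range_succ_shift_of_eq_zero ?_ ?_
    · rcases i with _ | i
      · simp [F]
      · simp [F, genStirling_succ_zero]
    · simp [F, genStirling_eq_zero_of_lt a (Nat.lt_succ_self i)]
  set G : ℕ → ℝ := fun j => x ^ (j + 1) * genStirling a i j * g (j + 1)
  calc ∑ j ∈ range (i + 1), x ^ j * genStirling a i j * ((i - a * j) * g j + x * g (j + 1))
      = ∑ j ∈ range (i + 1), F j + ∑ j ∈ range (i + 1), G j := by
        rw [← sum_add_distrib]
        exact sum_congr rfl fun j _ => by ring
    _ = ∑ j ∈ range (i + 1), F (j + 1) + ∑ j ∈ range (i + 1), G j := by rw [hF]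
    _ = ∑ j ∈ range (i + 2), x ^ j * genStirling a (i + 1) j * g j := by
        rw [sum_range_succ' (fun j => x ^ j * genStirling a (i + 1) j * g j),
          genStirling_succ_zero, mul_zero, zero_mul, add_zero, ← sum_add_distrib]
        refine sum_congr rfl fun j _ => ?_
        simp only [F, G, genStirling_succ_succ ha]
        push_cast
        ring

theorem Rrec_of_le (γ0 a p : ℝ) {n i : ℕ} (h : n ≤ i) (j : ℕ) : Rrec γ0 a p n i j = 1 := by
  rw [Rrec, dif_pos h]

theorem Rrec_of_lt (γ0 a p : ℝ) {n i : ℕ} (h : i < n) (j : ℕ) :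
    Rrec γ0 a p n i j
      = (i - a * j) * Rrec γ0 a p n (i + 1) j + γ0 * p ^ (-a) * Rrec γ0 a p n (i + 1) (j + 1) := by
  rw [Rrec, dif_neg h.not_ge]

theorem sum_pow_mul_genStirling_mul_Rrec_succ (γ0 : ℝ) {a : ℝ} (ha : a < 1) (p : ℝ) {n i : ℕ}
    (h : i < n) :
    ∑ j ∈ range (i + 1), (γ0 * p ^ (-a)) ^ j * genStirling a i j * Rrec γ0 a p n i j
      = ∑ j ∈ range (i + 2),
          (γ0 * p ^ (-a)) ^ j * genStirling a (i + 1) j * Rrec γ0 a p n (i + 1) j := by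
  simp only [Rrec_of_lt γ0 a p h]
  exact sum_pow_mul_genStirling_succ ha _ _ i

theorem Rrec_partial_sum_identity_general (γ0 a p : ℝ) (ha : a < 1)
    (hp0 : 0 < p) (i n : ℕ) (hin : i ≤ n) :
    ∑ j ∈ Finset.range (i + 1),
        γ0 ^ j * p ^ (-(a * (j : ℝ))) * genStirling a i j * Rrec γ0 a p n i j
      = Dsum γ0 a p n := by
  have hc (j : ℕ) : γ0 ^ j * p ^ (-(a * (j : ℝ))) = (γ0 * p ^ (-a)) ^ j := by
    rw [mul_pow, neg_mul_eq_neg_mul, Real.rpow_mul hp0.le, Real.rpow_natCast]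
  simp only [Dsum, hc]
  induction hin using Nat.decreasingInduction with
  | self => simp only [Rrec_of_le γ0 a p le_rfl, mul_one]
  | of_succ i hi ih => rw [sum_pow_mul_genStirling_mul_Rrec_succ γ0 ha p hi, ih]

/-- For γ0 > 0, a < 1, 0 < p < 1 and 1 ≤ i ≤ n:
Σ_{j=0}^{i} γ0^j·p^{−a·j}·S_a(i,j)·R_{n,γ0,a,p}(i,j) = Σ_{ℓ=0}^n γ0^ℓ·p^{−a·ℓ}·S_a(n,ℓ). -/
theorem Rrec_partial_sum_identity (γ0 a p : ℝ) (hγ : 0 < γ0) (ha : a < 1)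
    (hp0 : 0 < p) (hp1 : p < 1) (i n : ℕ) (hi : 1 ≤ i) (hin : i ≤ n) :
    ∑ j ∈ Finset.range (i + 1),
        γ0 ^ j * p ^ (-(a * (j : ℝ))) * genStirling a i j * Rrec γ0 a p n i j
      = Dsum γ0 a p n :=
  Rrec_partial_sum_identity_general γ0 a p ha hp0 i n hin
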